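/- Let w[S] = ((n-|S|)(1-θ) - ρ) θ^{|S|} and u[S] = (n - |S| - ρ) θ^{|S|} (1-θ)^{n-|S|} for S ⊆ [n]. Then for every S ⊆ [n], Σ_{T ⊇ S} (-1)^{|T\S|} w[T] = u[S]. -/

import Mathlib

/-!
Write each superset of `S` as `S ∪ A` with `A ⊆ C := Sᶜ`. The sum becomes
`θ^|S| · ∑_{A ⊆ C} (-θ)^|A| (|C \ A| (1-θ) - ρ)`. The `ρ`-part is the binomial expansion of
`(1-θ)^|C|`; in the other part, counting the pairs `(A, i)` with `i ∈ C \ A` by `i` first gives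
`|C|` copies of `∑_{A ⊆ C \ {i}} (-θ)^|A| = (1-θ)^(|C|-1)`.
-/

open Finset

section

variable {α R : Type*} [CommRing R]

theorem Finset.sum_powerset_pow_card (s : Finset α) (x : R) :
    ∑ t ∈ s.powerset, x ^ #t = (1 + x) ^ #s := by
  simpa using (prod_one_add (f := fun _ ↦ x) s).symm

variable [DecidableEq α]

theorem Finset.sum_powerset_pow_card_mul_card_sdiff (s : Finset α) (x : R) :
    ∑ t ∈ s.powerset, x ^ #t * #(s \ t) = ∑ i ∈ s, (1 + x) ^ #(s.erase i) := by
  calc ∑ t ∈ s.powerset, x ^ #t * #(s \ t)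
      = ∑ t ∈ s.powerset, ∑ i ∈ s \ t, x ^ #t := by simp [mul_comm]
    _ = ∑ i ∈ s, ∑ t ∈ s.powerset with i ∉ t, x ^ #t :=
        sum_comm' (by simp only [mem_sdiff, mem_filter, mem_powerset]; tauto)
    _ = ∑ i ∈ s, (1 + x) ^ #(s.erase i) := by
        refine sum_congr rfl fun i _ ↦ ?_
        rw [← sum_powerset_pow_card]
        congr 1
        ext t
        simp [subset_erase]

theorem Finset.sum_powerset_pow_card_mul_card_sdiff_sub (s : Finset α) (x ρ : R) :
    ∑ t ∈ s.powerset, x ^ #t * (#(s \ t) * (1 + x) - ρ) = (#s - ρ) * (1 + x) ^ #s := by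
  have hcount : ∑ t ∈ s.powerset, x ^ #t * #(s \ t) * (1 + x) = #s * (1 + x) ^ #s := by
    rw [← sum_mul, sum_powerset_pow_card_mul_card_sdiff, sum_mul]
    calc ∑ i ∈ s, (1 + x) ^ #(s.erase i) * (1 + x) = ∑ _i ∈ s, (1 + x) ^ #s :=
          sum_congr rfl fun i hi ↦ by rw [← pow_succ, card_erase_add_one hi]
      _ = #s * (1 + x) ^ #s := by simp
  simp only [mul_sub, sum_sub_distrib, ← mul_assoc, hcount, ← sum_mul, sum_powerset_pow_card]
  ring

theorem Finset.sum_filter_superset_eq_sum_powerset_compl [Fintype α] {M : Type*}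
    [AddCommMonoid M] (S : Finset α) (f : Finset α → M) :
    ∑ T ∈ univ.filter (S ⊆ ·), f T = ∑ A ∈ Sᶜ.powerset, f (S ∪ A) := by
  have hIcc : univ.filter (S ⊆ ·) = Icc S univ := by ext; simp
  rw [hIcc, Icc_eq_image_powerset (subset_univ S), sum_image, ← compl_eq_univ_sdiff]
  intro A hA B hB (h : S ∪ A = S ∪ B)
  simp only [coe_powerset, Set.mem_preimage, Set.mem_powerset_iff, coe_subset,
    ← compl_eq_univ_sdiff] at hA hB
  rw [← union_sdiff_cancel_left (disjoint_compl_right.mono_right hA),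
    ← union_sdiff_cancel_left (disjoint_compl_right.mono_right hB), h]

end

theorem mobius_transform_w_general (n : ℕ) (θ ρ : ℝ)
    (w u : Finset (Fin n) → ℝ)
    (hw : ∀ S : Finset (Fin n), w S = ((n - S.card) * (1 - θ) - ρ) * θ ^ S.card)
    (hu : ∀ S : Finset (Fin n), u S = (n - S.card - ρ) * θ ^ S.card * (1 - θ) ^ (n - S.card)) :
    ∀ S : Finset (Fin n),
      ∑ T ∈ Finset.univ.filter (fun T : Finset (Fin n) => S ⊆ T),
        (-1 : ℝ) ^ (T \ S).card * w T = u S := by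
  intro S
  have hcompl : #Sᶜ = n - #S := by simp [card_compl]
  have hcompl_real : (#Sᶜ : ℝ) = n - #S := by
    rw [hcompl, Nat.cast_sub (by simpa using card_le_univ S)]
  rw [sum_filter_superset_eq_sum_powerset_compl, hu]
  calc ∑ A ∈ Sᶜ.powerset, (-1 : ℝ) ^ #((S ∪ A) \ S) * w (S ∪ A)
      = ∑ A ∈ Sᶜ.powerset, θ ^ #S * ((-θ) ^ #A * (#(Sᶜ \ A) * (1 + -θ) - ρ)) := by
        refine sum_congr rfl fun A hA ↦ ?_
        have hAS : A ⊆ Sᶜ := mem_powerset.mp hA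
        have hdisj : Disjoint S A := disjoint_compl_right.mono_right hAS
        rw [union_sdiff_cancel_left hdisj, hw, card_union_of_disjoint hdisj,
          card_sdiff_of_subset hAS, Nat.cast_sub (card_le_card hAS), hcompl_real]
        push_cast
        ring
    _ = (n - #S - ρ) * θ ^ #S * (1 - θ) ^ (n - #S) := by
        rw [← mul_sum, sum_powerset_pow_card_mul_card_sdiff_sub, hcompl_real, ← hcompl]
        ring

/-- The Möbius transform of `w[S] = ((n-|S|)(1-θ) - ρ) θ^{|S|}` is
`u[S] = (n - |S| - ρ) θ^{|S|} (1-θ)^{n-|S|}`. -/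
theorem mobius_transform_w (n : ℕ) (hn : 0 < n) (θ ρ : ℝ) (hθ0 : 0 < θ) (hθ1 : θ < 1)
    (hρ : 0 < ρ)
    (w u : Finset (Fin n) → ℝ)
    (hw : ∀ S : Finset (Fin n), w S = ((n - S.card) * (1 - θ) - ρ) * θ ^ S.card)
    (hu : ∀ S : Finset (Fin n), u S = (n - S.card - ρ) * θ ^ S.card * (1 - θ) ^ (n - S.card)) :
    ∀ S : Finset (Fin n),
      ∑ T ∈ Finset.univ.filter (fun T : Finset (Fin n) => S ⊆ T),
        (-1 : ℝ) ^ (T \ S).card * w T = u S :=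
  mobius_transform_w_general n θ ρ w u hw hu
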